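/- Let R = R_1 × ⋯ × R_s be a product of finite local rings where R_i has maximal ideal of order m_i. The number of triangles in the unitary Cayley graph G_R equals (1/6) · |R^×| · |R| · Π_{i=1}^{s} (|R_i^×| − m_i). -/

import Mathlib

/-!
Count ordered triangles `(x, y, z)`: there are six per triangle, and the shear
`(x, y, z) ↦ (x, x - y, y - z)` turns them into a free vertex `x` together with a pair of units
`(a, b)` whose sum `a + b = x - z` is again a unit. Units of a product are computed coordinatewise,
so the number of such pairs is multiplicative. In a local ring a pair of units `(a, b)` fails only
when `a + b` lies in the maximal ideal, and `(a, b) ↦ (a, a + b)` matches these failures with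
`Aˣ × 𝔪`; hence there are `|Aˣ| (|Aˣ| - |𝔪|)` good pairs.
-/

open Polynomial

open Polynomial

/-- The unitary Cayley graph of a finite commutative ring `R`. -/
def unitaryCayley (R : Type*) [CommRing R] [Fintype R] [DecidableEq R] : SimpleGraph R where
  Adj x y := x ≠ y ∧ IsUnit (x - y)
  symm := ⟨by
    intro x y h
    exact ⟨h.1.symm, by simpa using h.2.neg⟩⟩
  loopless := ⟨fun x h => h.1 rfl⟩

instance unitaryCayley.instDecidableRel (R : Type*) [CommRing R] [Fintype R] [DecidableEq R] :
    DecidableRel (unitaryCayley R).Adj := fun a b =>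
  decidable_of_iff (a ≠ b ∧ ∃ c, (a - b) * c = 1)
    (by show _ ↔ (a ≠ b ∧ IsUnit (a - b)); exact and_congr Iff.rfl isUnit_iff_exists_inv.symm)

/-- An `r`-regular graph is Ramanujan if every adjacency eigenvalue other than `±r`
has absolute value at most `2 * sqrt (r - 1)`. -/
def IsRamanujan {V : Type*} [Fintype V] [DecidableEq V] (G : SimpleGraph V)
    [DecidableRel G.Adj] (r : ℕ) : Prop :=
  ∀ μ ∈ (SimpleGraph.adjMatrix ℝ G).charpoly.roots,
    |μ| ≠ (r : ℝ) → |μ| ≤ 2 * Real.sqrt ((r : ℝ) - 1)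

/-- The energy of a graph: the sum of absolute values of its adjacency eigenvalues. -/
noncomputable def graphEnergy {V : Type*} [Fintype V] [DecidableEq V] (G : SimpleGraph V)
    [DecidableRel G.Adj] : ℝ :=
  ((SimpleGraph.adjMatrix ℝ G).charpoly.roots.map (fun μ => |μ|)).sum

open Finset

theorem Finset.card_filter_pairwise_ne_product_eq_six {α : Type*} [DecidableEq α] {t : Finset α}
    (ht : #t = 3) :
    #{p ∈ t ×ˢ t ×ˢ t | p.1 ≠ p.2.1 ∧ p.2.1 ≠ p.2.2 ∧ p.1 ≠ p.2.2} = 6 := by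
  obtain ⟨x, y, z, hxy, hxz, hyz, rfl⟩ := card_eq_three.1 ht
  rw [card_filter]
  simp only [sum_product]
  simp [sum_insert, filter_insert, filter_singleton, hxy, hxz, hyz, hxy.symm, hxz.symm, hyz.symm]

namespace SimpleGraph

variable {V : Type*} [Fintype V] [DecidableEq V] (G : SimpleGraph V) [DecidableRel G.Adj]

def orderedTriangles : Finset (V × V × V) :=
  {p | G.Adj p.1 p.2.1 ∧ G.Adj p.2.1 p.2.2 ∧ G.Adj p.1 p.2.2}

theorem card_orderedTriangles_eq_six_mul : #G.orderedTriangles = 6 * #(G.cliqueFinset 3) := by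
  rw [orderedTriangles, card_eq_sum_card_fiberwise (f := fun p ↦ {p.1, p.2.1, p.2.2}) (t := G.cliqueFinset 3),
    sum_const_nat, mul_comm]
  · intro t ht
    rw [mem_cliqueFinset_iff] at ht
    rw [filter_filter, ← Finset.card_filter_pairwise_ne_product_eq_six ht.card_eq]
    congr 1
    ext ⟨a, b, c⟩
    simp only [mem_filter, mem_univ, true_and, mem_product]
    constructor
    · rintro ⟨⟨hab, hbc, hac⟩, rfl⟩
      simp [hab.ne, hbc.ne, hac.ne]
    · rintro ⟨⟨ha, hb, hc⟩, hab, hbc, hac⟩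
      refine ⟨⟨ht.isClique ha hb hab, ht.isClique hb hc hbc, ht.isClique ha hc hac⟩, ?_⟩
      refine eq_of_subset_of_card_le (by simp [insert_subset_iff, ha, hb, hc]) ?_
      rw [ht.card_eq, card_insert_of_notMem (by simp [hab, hac]), card_pair hbc]
  · rintro ⟨a, b, c⟩ hp
    simp only [coe_filter, mem_univ, true_and, Set.mem_ofPred_eq] at hp
    simpa [is3Clique_triple_iff] using ⟨hp.1, hp.2.2, hp.2.1⟩

end SimpleGraph

def unitSumPairs (R : Type*) [Semiring R] : Set (R × R) :=
  {q | IsUnit q.1 ∧ IsUnit q.2 ∧ IsUnit (q.1 + q.2)}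

theorem Nat.card_subtype_isUnit (M : Type*) [Monoid M] :
    Nat.card {x : M // IsUnit x} = Nat.card Mˣ :=
  (Nat.card_congr (Equiv.ofInjective _ Units.val_injective : Mˣ ≃ {x : M // IsUnit x})).symm

theorem Nat.card_units_pi {ι : Type*} [Fintype ι] (M : ι → Type*) [∀ i, Monoid (M i)] :
    Nat.card (∀ i, M i)ˣ = ∏ i, Nat.card (M i)ˣ := by
  rw [Nat.card_congr MulEquiv.piUnits.toEquiv, Nat.card_pi]

theorem Nat.card_unitSumPairs_pi {ι : Type*} [Fintype ι] (R : ι → Type*)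
    [∀ i, Semiring (R i)] :
    Nat.card (unitSumPairs (∀ i, R i)) = ∏ i, Nat.card (unitSumPairs (R i)) := by
  let e : unitSumPairs (∀ i, R i) ≃ ∀ i, unitSumPairs (R i) :=
    ((Equiv.arrowProdEquivProdArrow ι R R).symm.subtypeEquiv fun q ↦ by
      simp [unitSumPairs, Pi.isUnit_iff, forall_and]).trans Equiv.subtypePiEquivPi
  rw [Nat.card_congr e, Nat.card_pi]

section unitaryCayley

variable (R : Type*) [CommRing R] [Fintype R] [DecidableEq R]

theorem unitaryCayley_adj_iff [Nontrivial R] {x y : R} :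
    (unitaryCayley R).Adj x y ↔ IsUnit (x - y) :=
  ⟨And.right, fun h ↦ ⟨fun hxy ↦ by simp [hxy] at h, h⟩⟩

theorem card_orderedTriangles_unitaryCayley [Nontrivial R] :
    #(unitaryCayley R).orderedTriangles = Fintype.card R * Nat.card (unitSumPairs R) := by
  let e : (R × R × R) ≃ R × R × R :=
    { toFun p := (p.1, p.1 - p.2.1, p.2.1 - p.2.2)
      invFun q := (q.1, q.1 - q.2.1, q.1 - q.2.1 - q.2.2)
      left_inv := by rintro ⟨x, y, z⟩; simp
      right_inv := by rintro ⟨x, a, b⟩; simp }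
  let f : {p : R × R × R // (unitaryCayley R).Adj p.1 p.2.1 ∧
      (unitaryCayley R).Adj p.2.1 p.2.2 ∧ (unitaryCayley R).Adj p.1 p.2.2} ≃
      {q : R × R × R // q.2 ∈ unitSumPairs R} :=
    e.subtypeEquiv fun p ↦ by simp [e, unitSumPairs, unitaryCayley_adj_iff]
  let g : {q : R × R × R // q.2 ∈ unitSumPairs R} ≃ R × unitSumPairs R :=
    { toFun q := (q.1.1, ⟨q.1.2, q.2⟩)
      invFun q := ⟨(q.1, q.2), q.2.2⟩ }
  rw [SimpleGraph.orderedTriangles, ← Fintype.card_subtype, ← Nat.card_eq_fintype_card,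
    Nat.card_congr (f.trans g), Nat.card_prod, Nat.card_eq_fintype_card]

end unitaryCayley

namespace IsLocalRing

variable (A : Type*) [CommRing A] [IsLocalRing A]

theorem isUnit_sub_of_mem_maximalIdeal {x u : A} (hx : x ∈ maximalIdeal A) (hu : IsUnit u) :
    IsUnit (x - u) := by
  by_contra h
  exact (sub_sub_cancel x u ▸ (maximalIdeal A).sub_mem hx h) hu

theorem card_unitSumPairs_add [Finite A] :
    Nat.card (unitSumPairs A) + Nat.card Aˣ * Nat.card (maximalIdeal A) =
      Nat.card Aˣ * Nat.card Aˣ := by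
  let S : Set (A × A) := {q | IsUnit q.1 ∧ IsUnit q.2}
  let T : Set (A × A) := {q | IsUnit (q.1 + q.2)}
  have hST : S ∩ T = unitSumPairs A := by ext; simp [S, T, unitSumPairs, and_assoc]
  let e : ↥(S \ T) ≃ {x : A // IsUnit x} × maximalIdeal A :=
    { toFun q := (⟨q.1.1, q.2.1.1⟩, ⟨q.1.1 + q.1.2, q.2.2⟩)
      invFun p := ⟨(p.1, p.2 - p.1), ⟨p.1.2, isUnit_sub_of_mem_maximalIdeal A p.2.2 p.1.2⟩,
        show ¬IsUnit (_ + (_ - _)) by rw [add_sub_cancel]; exact p.2.2⟩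
      left_inv := by rintro ⟨⟨a, b⟩, h⟩; simp
      right_inv := by rintro ⟨⟨a, ha⟩, ⟨c, hc⟩⟩; simp }
  have hS : Nat.card S = Nat.card Aˣ * Nat.card Aˣ := by
    rw [Nat.card_congr (α := S) Equiv.subtypeProdEquivProd, Nat.card_prod, Nat.card_subtype_isUnit]
  have hSdiffT : Nat.card ↥(S \ T) = Nat.card Aˣ * Nat.card (maximalIdeal A) := by
    rw [Nat.card_congr e, Nat.card_prod, Nat.card_subtype_isUnit]
  rw [← hS, ← hSdiffT, ← hST]
  exact Set.ncard_inter_add_ncard_sdiff_eq_ncard S T (Set.toFinite S)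

end IsLocalRing

/-- Let `R = R₁ × ⋯ × R_s` be a product of finite local rings, where `Rᵢ` has maximal
ideal of order `mᵢ`. Then the number of triangles of `G_R` equals
`(1/6) · |R^×| · |R| · Π_i (|Rᵢ^×| - mᵢ)`. -/
theorem stmt_19 (s : ℕ) (hs : 0 < s) (R : Fin s → Type*) [∀ i, CommRing (R i)]
    [∀ i, IsLocalRing (R i)] [∀ i, Fintype (R i)] [∀ i, DecidableEq (R i)]
    (M : ∀ i, Ideal (R i)) (hM : ∀ i, (M i).IsMaximal)
    (m : Fin s → ℕ) (hm : ∀ i, m i = Nat.card (M i)) :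
    (((unitaryCayley (∀ i, R i)).cliqueFinset 3).card : ℝ) =
      (1 / 6 : ℝ) * (Nat.card (∀ i, R i)ˣ : ℝ) * (Fintype.card (∀ i, R i) : ℝ) *
        ∏ i, ((Nat.card (R i)ˣ : ℝ) - (m i : ℝ)) := by
  have : Nontrivial (∀ i, R i) := Pi.nontrivial_at (⟨0, hs⟩ : Fin s)
  have hcount := (card_orderedTriangles_unitaryCayley (∀ i, R i)).symm.trans
    ((unitaryCayley (∀ i, R i)).card_orderedTriangles_eq_six_mul)
  rw [Nat.card_unitSumPairs_pi] at hcount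
  have hlocal i : (Nat.card (unitSumPairs (R i)) : ℝ) =
      Nat.card (R i)ˣ * (Nat.card (R i)ˣ - m i) := by
    have := congrArg (Nat.cast (R := ℝ)) (IsLocalRing.card_unitSumPairs_add (R i))
    rw [hm i, IsLocalRing.eq_maximalIdeal (hM i)]
    push_cast at this
    linarith
  have hcountℝ := congrArg (Nat.cast (R := ℝ)) hcount
  push_cast at hcountℝ
  rw [Nat.card_units_pi, Nat.cast_prod]
  simp only [hlocal, prod_mul_distrib] at hcountℝ
  linarith
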